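/- Decoupling of the left-noise eigenvector equation: let G be a finite group, U : G → U(d) a group homomorphism, T : G → superoperators an arbitrary family, L a superoperator, and p, t ∈ ℂ. Then E_{g∈G}[T(g) ∘ L ∘ Ad(U g)⁻¹] = L ∘ D_{p,t} holds if and only if both (E_{g∈G} T(g))(L(I_d)) = t·L(I_d) and E_{g∈G}[T(g) ∘ (L ∘ Π₀) ∘ Ad(U g)⁻¹] = p·(L ∘ Π₀). -/

import Mathlib

noncomputable section

namespace RBPaper

abbrev Mat (d : ℕ) := Matrix (Fin d) (Fin d) ℂ

abbrev SuperOp (d : ℕ) := Module.End ℂ (Mat d)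

/-- The superoperator `X ↦ U X Uᴴ` for a unitary `U`. -/
def Ad {d : ℕ} (U : Matrix.unitaryGroup (Fin d) ℂ) : SuperOp d :=
  LinearMap.mulLeft ℂ (U : Mat d) ∘ₗ LinearMap.mulRight ℂ (star (U : Mat d))

/-- The superoperator `X ↦ tr(X) • I`. -/
def traceMap (d : ℕ) : SuperOp d :=
  (Matrix.traceLinearMap (Fin d) ℂ ℂ).smulRight (1 : Mat d)

/-- The depolarizing-type map `D_{p,t} : X ↦ (t/d)·tr(X)·I + p·(X − (tr(X)/d)·I)`. -/
def Dpt (d : ℕ) (p t : ℂ) : SuperOp d :=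
  (t / d) • traceMap d + p • (LinearMap.id - (d : ℂ)⁻¹ • traceMap d)

/-- The projection `Π₀ : X ↦ X − (tr(X)/d)·I` onto traceless matrices. -/
def Pi0 (d : ℕ) : SuperOp d := LinearMap.id - (d : ℂ)⁻¹ • traceMap d

/-- Uniform average of a finitely-indexed family in a `ℂ`-module. -/
def expG {G : Type*} [Fintype G] {M : Type*} [AddCommMonoid M] [Module ℂ M]
    (f : G → M) : M := (Fintype.card G : ℂ)⁻¹ • ∑ g, f g

/-- `(G, U)` is a unitary 2-design: the conjugation action has no nontrivial
invariant subspace of the traceless matrices. -/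
def IsTwoDesign {d : ℕ} {G : Type*} [Group G] [Fintype G]
    (U : G →* Matrix.unitaryGroup (Fin d) ℂ) : Prop :=
  ∀ W : Submodule ℂ (Mat d),
    W ≤ LinearMap.ker (Matrix.traceLinearMap (Fin d) ℂ ℂ) →
    (∀ (g : G), ∀ X ∈ W, Ad (U g) X ∈ W) →
    W = ⊥ ∨ W = LinearMap.ker (Matrix.traceLinearMap (Fin d) ℂ ℂ)



section Aux

variable {d : ℕ}

lemma Ad_apply (V : Matrix.unitaryGroup (Fin d) ℂ) (X : Mat d) :
    Ad V X = V.1 * X * star V.1 := by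
  simp [Ad, LinearMap.mulLeft_apply, LinearMap.mulRight_apply, mul_assoc]

lemma Ad_one (V : Matrix.unitaryGroup (Fin d) ℂ) : Ad V 1 = 1 := by
  rw [Ad_apply, mul_one]
  exact (Unitary.mem_iff.mp V.2).2

lemma trace_Ad (V : Matrix.unitaryGroup (Fin d) ℂ) (X : Mat d) :
    Matrix.trace (Ad V X) = Matrix.trace X := by
  rw [Ad_apply, Matrix.trace_mul_cycle, Matrix.UnitaryGroup.star_mul_self, Matrix.one_mul]

lemma traceMap_apply (X : Mat d) : traceMap d X = Matrix.trace X • 1 := rfl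

lemma Pi0_apply (X : Mat d) :
    Pi0 d X = X - (d : ℂ)⁻¹ • (Matrix.trace X • 1) := rfl

lemma Pi0_Ad (V : Matrix.unitaryGroup (Fin d) ℂ) (X : Mat d) :
    Pi0 d (Ad V X) = Ad V (Pi0 d X) := by
  rw [Pi0_apply, Pi0_apply, trace_Ad, map_sub, map_smul, map_smul, Ad_one]

lemma superop_eq_iff (F G : SuperOp d) :
    F = G ↔ F 1 = G 1 ∧ F ∘ₗ Pi0 d = G ∘ₗ Pi0 d := by
  constructor
  · rintro rfl; exact ⟨rfl, rfl⟩
  · rintro ⟨h1, h2⟩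
    refine LinearMap.ext fun X => ?_
    have hX : X = Pi0 d X + (d : ℂ)⁻¹ • (Matrix.trace X • 1) := by
      rw [Pi0_apply]; abel
    calc F X = F (Pi0 d X) + (d : ℂ)⁻¹ • (Matrix.trace X • F 1) := by
          conv_lhs => rw [hX]
          rw [map_add, map_smul, map_smul]
      _ = G (Pi0 d X) + (d : ℂ)⁻¹ • (Matrix.trace X • G 1) := by
          rw [h1, ← LinearMap.comp_apply, h2, LinearMap.comp_apply]
      _ = G X := by
          rw [← map_smul, ← map_smul, ← map_add, ← hX]

end Aux

/-- Decoupling of the left-noise eigenvector equation. -/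
theorem left_noise_decoupling {d : ℕ} {G : Type*} [Group G] [Fintype G]
    (U : G →* Matrix.unitaryGroup (Fin d) ℂ) (T : G → SuperOp d)
    (L : SuperOp d) (p t : ℂ) :
    expG (fun g : G => T g ∘ₗ L ∘ₗ Ad ((U g)⁻¹)) = L ∘ₗ Dpt d p t ↔
      (expG (fun g : G => T g)) (L 1) = t • L 1 ∧
        expG (fun g : G => T g ∘ₗ (L ∘ₗ Pi0 d) ∘ₗ Ad ((U g)⁻¹)) = p • (L ∘ₗ Pi0 d) := by
  rcases Nat.eq_zero_or_pos d with hd | hd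
  · subst hd
    haveI : Subsingleton (Mat 0) := ⟨fun a b => by ext i j; exact i.elim0⟩
    constructor <;> intro _ <;>
      first
        | exact ⟨Subsingleton.elim _ _, Subsingleton.elim _ _⟩
        | exact Subsingleton.elim _ _
  · have hd' : (d : ℂ) ≠ 0 := Nat.cast_ne_zero.mpr hd.ne'
    have hR1 : (L ∘ₗ Dpt d p t) 1 = t • L 1 := by
      have h1 : Dpt d p t 1 = t • 1 := by
        simp only [Dpt, traceMap, LinearMap.add_apply, LinearMap.smul_apply,
          LinearMap.smulRight_apply, Matrix.traceLinearMap_apply, Matrix.trace_one,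
          LinearMap.sub_apply, LinearMap.id_apply, smul_smul]
        rw [Fintype.card_fin, div_mul_cancel₀ _ hd', inv_mul_cancel₀ hd',
          one_smul, sub_self, smul_zero, add_zero]
      rw [LinearMap.comp_apply, h1, map_smul]
    have hRPi : (L ∘ₗ Dpt d p t) ∘ₗ Pi0 d = p • (L ∘ₗ Pi0 d) := by
      have hDPi : Dpt d p t ∘ₗ Pi0 d = p • Pi0 d := by
        refine LinearMap.ext fun X => ?_
        have htr : Matrix.trace (Pi0 d X) = 0 := by
          simp only [Pi0_apply, Matrix.trace_sub, Matrix.trace_smul,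
            Matrix.trace_one, Fintype.card_fin, smul_eq_mul]
          field_simp
          ring
        simp only [LinearMap.comp_apply, Dpt, traceMap, LinearMap.add_apply,
          LinearMap.smul_apply, LinearMap.smulRight_apply, Matrix.traceLinearMap_apply,
          LinearMap.sub_apply, LinearMap.id_apply, htr, zero_smul, smul_zero,
          zero_add, sub_zero]
      rw [LinearMap.comp_assoc, hDPi, LinearMap.comp_smul]
    have hL1 : (expG (fun g : G => T g ∘ₗ L ∘ₗ Ad ((U g)⁻¹))) 1
        = (expG (fun g : G => T g)) (L 1) := by
      simp [expG, Ad_one]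
    have hLPi : (expG (fun g : G => T g ∘ₗ L ∘ₗ Ad ((U g)⁻¹))) ∘ₗ Pi0 d
        = expG (fun g : G => T g ∘ₗ (L ∘ₗ Pi0 d) ∘ₗ Ad ((U g)⁻¹)) := by
      refine LinearMap.ext fun X => ?_
      simp only [expG, LinearMap.smul_apply, LinearMap.sum_apply, LinearMap.comp_apply]
      congr 1
      refine Finset.sum_congr rfl fun g _ => ?_
      rw [Pi0_Ad]
    rw [superop_eq_iff, hR1, hRPi, hL1, hLPi]


end RBPaper
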